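/- For coprime integers p > 1 and q, (1/p) · Σ' 1/((ζ−1)(ζ^q−1)) = −s(q,p) + (p−1)/(4p), where the primed sum runs over all p-th roots of unity ζ ≠ 1 in ℂ. -/

import Mathlib

open scoped Classical

/-- The Dedekind symbol `((x))`. -/
noncomputable def dedekindSymbol (x : ℝ) : ℝ :=
  if ∃ n : ℤ, x = (n : ℝ) then 0 else Int.fract x - 1/2

/-- The classical Dedekind sum `s(q,p)` with integer first argument. -/
noncomputable def dedekindSum (q : ℤ) (p : ℕ) : ℝ :=
  ∑ μ ∈ Finset.range p,
    dedekindSymbol ((μ : ℝ) / (p : ℝ)) * dedekindSymbol ((q : ℝ) * (μ : ℝ) / (p : ℝ))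

/-- The set of `p`-th roots of unity in `ℂ` different from `1`. -/
noncomputable def nontrivialRootsOfUnity (p : ℕ) : Finset ℂ :=
  (Polynomial.nthRoots p (1 : ℂ)).toFinset.erase 1

open Finset Polynomial

/-!
For a nontrivial `p`-th root of unity `ζ` one has `1 / (ζ - 1) = ∑_{j<p} {j/p} ζ^j`, and `ζ^q`
is again nontrivial because `q` is prime to `p`. Multiplying the expansions of `1 / (ζ - 1)`
and `1 / (ζ^q - 1)` and summing over all `p`-th roots of unity, orthogonality leaves
`p ∑_{k<p} {-qk/p} {k/p}`; the root `ζ = 1` contributes `((p - 1) / 2)^2`, which is subtracted.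
Off the integers `{x} = ((x)) + 1/2` and `((-x)) = -((x))`, so the sum of products of
fractional parts is `-s(q,p) + (p - 1)/4`: the linear terms vanish since an odd `p`-periodic
function sums to zero over a period.
-/

lemma eq_one_of_zpow_eq_one_of_isCoprime {G₀ : Type*} [GroupWithZero G₀] {x : G₀} {m n : ℤ}
    (hx : x ≠ 0) (hm : x ^ m = 1) (hn : x ^ n = 1) (h : IsCoprime m n) : x = 1 := by
  obtain ⟨u, v, huv⟩ := h
  calc x = x ^ (u * m + v * n) := by rw [huv, zpow_one]
    _ = (x ^ m) ^ u * (x ^ n) ^ v := by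
      rw [zpow_add₀ hx, mul_comm u, mul_comm v, zpow_mul, zpow_mul]
    _ = 1 := by rw [hm, hn, one_zpow, one_zpow, one_mul]

lemma sub_one_mul_sum_range_natCast_mul_pow {R : Type*} [CommRing R] (x : R) (n : ℕ) :
    (x - 1) * ∑ j ∈ range n, (j : R) * x ^ j
      = ((n : R) - 1) * x ^ n + 1 - ∑ j ∈ range n, x ^ j := by
  induction n with
  | zero => simp
  | succ n ih =>
    rw [sum_range_succ, sum_range_succ (fun j => x ^ j), mul_add, ih]
    push_cast
    ring

lemma sub_one_mul_sum_range_natCast_mul_pow_of_pow_eq_one {R : Type*} [CommRing R] [IsDomain R]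
    {ζ : R} {n : ℕ} (hζn : ζ ^ n = 1) (hζ : ζ ≠ 1) :
    (ζ - 1) * ∑ j ∈ range n, (j : R) * ζ ^ j = n := by
  have hgeom : ∑ j ∈ range n, ζ ^ j = 0 := by
    have := geom_sum_mul ζ n
    rw [hζn, sub_self] at this
    exact (mul_eq_zero.mp this).resolve_right (sub_ne_zero.mpr hζ)
  rw [sub_one_mul_sum_range_natCast_mul_pow, hζn, hgeom]
  ring

lemma Function.Periodic.sum_range_ite_dvd_add {M : Type*} [AddCommMonoid M] {c : ℤ → M}
    {n : ℕ} (hc : Function.Periodic c n) (hn : 0 < n) (m : ℤ) :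
    ∑ j ∈ range n, (if (n : ℤ) ∣ j + m then c j else 0) = c (-m) := by
  have hn' : (0 : ℤ) < n := by exact_mod_cast hn
  set j₀ := ((-m) % n).toNat
  have hj₀ : (j₀ : ℤ) = (-m) % n := Int.toNat_of_nonneg (Int.emod_nonneg _ hn'.ne')
  have hdvd_iff : ∀ j ∈ range n, (n : ℤ) ∣ j + m ↔ j₀ = j := fun j hj => by
    rw [show (j : ℤ) + m = j - -m by ring, ← Int.modEq_iff_dvd, Int.ModEq,
      Int.emod_eq_of_lt (a := (j : ℤ)) (by positivity) (by exact_mod_cast mem_range.mp hj),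
      ← hj₀, Nat.cast_inj]
  rw [sum_congr rfl fun j hj => if_congr (hdvd_iff j hj) rfl rfl, sum_ite_eq,
    if_pos (mem_range.mpr (by have := Int.emod_lt_of_pos (-m) hn'; omega)), hj₀, Int.emod_def,
    mul_comm]
  exact hc.sub_zsmul_eq _

namespace IsPrimitiveRoot

variable {K : Type*} [Field K] {ω : K} {n : ℕ}

lemma sum_nthRootsFinset_one {M : Type*} [AddCommMonoid M] (hω : IsPrimitiveRoot ω n)
    (f : K → M) :
    ∑ ζ ∈ nthRootsFinset n (1 : K), f ζ = ∑ a ∈ range n, f (ω ^ a) := by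
  rcases n.eq_zero_or_pos with rfl | hn
  · simp
  symm
  have : NeZero n := ⟨hn.ne'⟩
  refine sum_nbij (ω ^ ·) (fun a _ => ?_) (fun a ha b hb hab => ?_) (fun ζ hζ => ?_)
    fun _ _ => rfl
  · rw [Polynomial.mem_nthRootsFinset hn, ← pow_mul, mul_comm, pow_mul, hω.pow_eq_one,
      one_pow]
  · exact hω.pow_inj (mem_range.mp ha) (mem_range.mp hb) hab
  · obtain ⟨a, ha, rfl⟩ :=
      hω.eq_pow_of_pow_eq_one ((Polynomial.mem_nthRootsFinset hn 1).mp hζ)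
    exact ⟨a, mem_range.mpr ha, rfl⟩

lemma sum_nthRootsFinset_zpow (hω : IsPrimitiveRoot ω n) (m : ℤ) :
    ∑ ζ ∈ nthRootsFinset n (1 : K), ζ ^ m = if (n : ℤ) ∣ m then (n : K) else 0 := by
  rw [hω.sum_nthRootsFinset_one]
  have hcomm (a : ℕ) : (ω ^ a) ^ m = (ω ^ m) ^ a := by
    rw [← zpow_natCast ω a, ← zpow_natCast (ω ^ m) a, ← zpow_mul, ← zpow_mul, mul_comm]
  simp_rw [hcomm]
  split_ifs with hdvd
  · simp [(hω.zpow_eq_one_iff_dvd m).mpr hdvd]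
  · have hne : ω ^ m ≠ 1 := fun h => hdvd ((hω.zpow_eq_one_iff_dvd m).mp h)
    rw [geom_sum_eq hne, ← zpow_natCast, ← zpow_mul, mul_comm, zpow_mul, zpow_natCast,
      hω.pow_eq_one, one_zpow, sub_self, zero_div]

lemma sum_nthRootsFinset_mul_sum (hω : IsPrimitiveRoot ω n) {c d : ℤ → K}
    (hc : Function.Periodic c n) (q : ℤ) :
    ∑ ζ ∈ nthRootsFinset n (1 : K),
        (∑ j ∈ range n, c j * ζ ^ j) * ∑ k ∈ range n, d k * (ζ ^ q) ^ k
      = n * ∑ k ∈ range n, c (-(q * k)) * d k := by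
  rcases n.eq_zero_or_pos with rfl | hn
  · simp
  calc _ = ∑ ζ ∈ nthRootsFinset n (1 : K), ∑ j ∈ range n, ∑ k ∈ range n,
        c j * d k * ζ ^ ((j : ℤ) + q * k) := by
        refine sum_congr rfl fun ζ hζ => ?_
        have hζ0 : ζ ≠ 0 := by
          rintro rfl
          simp [Polynomial.mem_nthRootsFinset hn, zero_pow hn.ne'] at hζ
        rw [sum_mul_sum]
        refine sum_congr rfl fun j _ => sum_congr rfl fun k _ => ?_
        rw [zpow_add₀ hζ0, zpow_mul, zpow_natCast, zpow_natCast]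
        ring
    _ = ∑ j ∈ range n, ∑ k ∈ range n,
        c j * d k * ∑ ζ ∈ nthRootsFinset n (1 : K), ζ ^ ((j : ℤ) + q * k) := by
        rw [sum_comm]
        simp_rw [mul_sum]
        exact sum_congr rfl fun j _ => sum_comm
    _ = ∑ k ∈ range n, d k * n * ∑ j ∈ range n,
        if (n : ℤ) ∣ j + q * k then c j else 0 := by
        rw [sum_comm]
        simp only [hω.sum_nthRootsFinset_zpow, mul_sum]
        refine sum_congr rfl fun k _ => sum_congr rfl fun j _ => ?_
        split_ifs <;> ring
    _ = _ := by
        simp only [hc.sum_range_ite_dvd_add hn, mul_sum]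
        refine sum_congr rfl fun k _ => ?_
        ring

end IsPrimitiveRoot

lemma sum_range_eq_zero_of_periodic_of_odd {M : Type*} [AddCommGroup M] [IsAddTorsionFree M]
    {h : ℤ → M} {n : ℕ} (hper : Function.Periodic h n) (hodd : ∀ k, h (-k) = -h k) :
    ∑ k ∈ range n, h k = 0 := by
  have hshift : ∑ k ∈ range n, h (k + 1) = ∑ k ∈ range n, h k := by
    have := sum_range_succ' (fun k : ℕ => h k) n
    rw [sum_range_succ, hper.eq, Nat.cast_zero, add_left_inj] at this
    exact_mod_cast this.symm
  have hreflect : ∑ k ∈ range n, h (k + 1) = -∑ k ∈ range n, h k := by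
    rw [← sum_range_reflect, ← sum_neg_distrib]
    refine sum_congr rfl fun k hk => ?_
    rw [← hodd, ← hper.sub_eq']
    congr 1
    have := mem_range.mp hk
    omega
  exact self_eq_neg.mp (hshift.symm.trans hreflect)

lemma dedekindSymbol_eq_ite (x : ℝ) :
    dedekindSymbol x = if Int.fract x = 0 then 0 else Int.fract x - 1 / 2 := by
  simp only [dedekindSymbol, Int.fract_eq_zero_iff, Set.mem_range, eq_comm]

lemma dedekindSymbol_periodic : Function.Periodic dedekindSymbol 1 := fun x => by
  simp only [dedekindSymbol_eq_ite, Int.fract_add_one]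

lemma dedekindSymbol_neg (x : ℝ) : dedekindSymbol (-x) = -dedekindSymbol x := by
  simp only [dedekindSymbol_eq_ite, Int.fract_neg_eq_zero]
  split_ifs with hx
  · simp
  · rw [Int.fract_neg hx]
    ring

lemma sum_range_dedekindSymbol_mul_div (q : ℤ) (p : ℕ) :
    ∑ k ∈ range p, dedekindSymbol (q * k / p) = 0 := by
  rcases p.eq_zero_or_pos with rfl | hp
  · simp
  have hper : Function.Periodic (fun k : ℤ => dedekindSymbol (q * k / p)) p := fun k => by
    have : (q : ℝ) * ↑(k + p) / p = q * k / p + q := by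
      push_cast
      field_simp
    simp only [this]
    simpa using dedekindSymbol_periodic.int_mul q (q * k / p)
  have hodd (k : ℤ) : dedekindSymbol (q * ↑(-k) / p) = -dedekindSymbol (q * k / p) := by
    rw [← dedekindSymbol_neg]
    congr 1
    push_cast
    ring
  simpa using sum_range_eq_zero_of_periodic_of_odd hper hodd

lemma dedekindSymbol_of_fract_ne_zero {x : ℝ} (hx : Int.fract x ≠ 0) :
    dedekindSymbol x = Int.fract x - 1 / 2 := by
  rw [dedekindSymbol_eq_ite, if_neg hx]

lemma fract_intCast_div_ne_zero {m : ℤ} {p : ℕ} (hp : p ≠ 0) (hm : ¬(p : ℤ) ∣ m) :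
    Int.fract ((m : ℝ) / p) ≠ 0 := by
  rw [Int.fract_div_intCast_eq_div_intCast_mod, div_ne_zero_iff, Int.cast_ne_zero,
    Nat.cast_ne_zero]
  exact ⟨fun h => hm (Int.dvd_of_emod_eq_zero h), hp⟩

lemma sum_range_fract_mul_fract_eq_neg_dedekindSum {p : ℕ} {q : ℤ} (hp : 0 < p)
    (hq : IsCoprime q p) :
    ∑ k ∈ range p, Int.fract (-(q * k) / p : ℝ) * Int.fract (k / p : ℝ)
      = -dedekindSum q p + (p - 1) / 4 := by
  have hterm : ∀ k ∈ range p, Int.fract (-(q * k) / p : ℝ) * Int.fract (k / p : ℝ)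
      = -(dedekindSymbol (k / p) * dedekindSymbol (q * k / p))
        + (dedekindSymbol (k / p) - dedekindSymbol (q * k / p)) / 2 + 1 / 4
        - if k = 0 then 1 / 4 else 0 := by
    intro k hk
    rcases Nat.eq_zero_or_pos k with rfl | hk0
    · simp [dedekindSymbol_eq_ite]
    have hkp : ¬(p : ℤ) ∣ k := fun h =>
      hk0.ne' (Nat.eq_zero_of_dvd_of_lt (Int.natCast_dvd_natCast.mp h) (mem_range.mp hk))
    have hqkp : ¬(p : ℤ) ∣ q * k := fun h => hkp (hq.symm.dvd_of_dvd_mul_left h)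
    have h1 := fract_intCast_div_ne_zero hp.ne' hkp
    have h2 := fract_intCast_div_ne_zero hp.ne' hqkp
    push_cast at h1 h2
    rw [neg_div, Int.fract_neg h2, dedekindSymbol_of_fract_ne_zero h1,
      dedekindSymbol_of_fract_ne_zero h2, if_neg hk0.ne']
    ring
  have hsum := sum_range_dedekindSymbol_mul_div 1 p
  simp only [Int.cast_one, one_mul] at hsum
  rw [sum_congr rfl hterm, sum_sub_distrib, sum_add_distrib, sum_add_distrib, sum_neg_distrib,
    ← sum_div, sum_sub_distrib, hsum, sum_range_dedekindSymbol_mul_div, sum_const, card_range,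
    sum_ite_eq', if_pos (mem_range.mpr hp), dedekindSum, nsmul_eq_mul]
  ring

lemma fract_natCast_div_of_lt {j p : ℕ} (h : j < p) : Int.fract ((j : ℝ) / p) = j / p := by
  rw [Int.fract_div_natCast_eq_div_natCast_mod, Nat.mod_eq_of_lt h]

lemma sum_range_fract_div {p : ℕ} (hp : 0 < p) :
    ∑ j ∈ range p, Int.fract ((j : ℝ) / p) = (p - 1) / 2 := by
  rw [sum_congr rfl fun j hj => fract_natCast_div_of_lt (mem_range.mp hj), ← sum_div]
  have hgauss := congrArg (Nat.cast : ℕ → ℝ) (sum_range_id_mul_two p)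
  push_cast [Nat.cast_pred hp] at hgauss
  field_simp
  linarith

lemma sum_range_fract_div_mul_pow {p : ℕ} (hp : 0 < p) {ζ : ℂ} (hζp : ζ ^ p = 1)
    (hζ : ζ ≠ 1) :
    ∑ j ∈ range p, ((Int.fract ((j : ℝ) / p) : ℝ) : ℂ) * ζ ^ j = 1 / (ζ - 1) := by
  have := sub_one_mul_sum_range_natCast_mul_pow_of_pow_eq_one hζp hζ
  rw [sum_congr rfl fun j hj => by rw [fract_natCast_div_of_lt (mem_range.mp hj)]]
  push_cast
  simp_rw [div_mul_eq_mul_div, ← sum_div]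
  rw [div_eq_div_iff (by exact_mod_cast hp.ne') (sub_ne_zero.mpr hζ)]
  linear_combination this

lemma one_div_sub_one_mul_zpow_sub_one {p : ℕ} {q : ℤ} (hq : IsCoprime q p) {ζ : ℂ}
    (hζ : ζ ∈ nontrivialRootsOfUnity p) :
    1 / ((ζ - 1) * (ζ ^ q - 1))
      = (∑ j ∈ range p, ((Int.fract ((j : ℝ) / p) : ℝ) : ℂ) * ζ ^ j)
        * ∑ k ∈ range p, ((Int.fract ((k : ℝ) / p) : ℝ) : ℂ) * (ζ ^ q) ^ k := by
  obtain ⟨hζ1, hζp⟩ := mem_erase.mp hζ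
  have hp : 0 < p := Nat.pos_of_ne_zero (by rintro rfl; simp at hζp)
  rw [Multiset.mem_toFinset, mem_nthRoots hp] at hζp
  have hζ0 : ζ ≠ 0 := by
    rintro rfl
    simp [zero_pow hp.ne'] at hζp
  have hζqp : (ζ ^ q) ^ p = 1 := by
    rw [← zpow_natCast, ← zpow_mul, mul_comm, zpow_mul, zpow_natCast, hζp, one_zpow]
  have hζq1 : ζ ^ q ≠ 1 := fun h =>
    hζ1 (eq_one_of_zpow_eq_one_of_isCoprime hζ0 h (by exact_mod_cast hζp) hq)
  rw [sum_range_fract_div_mul_pow hp hζp hζ1, sum_range_fract_div_mul_pow hp hζqp hζq1,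
    one_div_mul_one_div]

theorem fourier_dedekind_sum (p : ℕ) (q : ℤ) (hp : 1 < p) (hcop : Int.gcd q (p : ℤ) = 1) :
    (1 / (p : ℂ)) * ∑ ζ ∈ nontrivialRootsOfUnity p, 1 / ((ζ - 1) * (ζ ^ q - 1)) =
      ((-dedekindSum q p + ((p : ℝ) - 1) / (4 * (p : ℝ)) : ℝ) : ℂ) := by
  have hp0 : 0 < p := by omega
  have hq : IsCoprime q p := Int.isCoprime_iff_gcd_eq_one.mpr hcop
  set c : ℤ → ℂ := fun j => ((Int.fract ((j : ℝ) / p) : ℝ) : ℂ)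
  have hc : Function.Periodic c p := fun j => by
    simp [c, add_div, div_self (Nat.cast_ne_zero.mpr hp0.ne' : (p : ℝ) ≠ 0)]
  have hconv :=
    (Complex.isPrimitiveRoot_exp p hp0.ne').sum_nthRootsFinset_mul_sum hc (d := c) q
  simp only [c, Int.cast_natCast] at hconv
  have h1mem : (1 : ℂ) ∈ nthRootsFinset p (1 : ℂ) :=
    (mem_nthRootsFinset hp0 1).mpr (one_pow p)
  rw [sum_congr rfl fun ζ hζ => one_div_sub_one_mul_zpow_sub_one hq hζ, nontrivialRootsOfUnity,
    ← nthRootsFinset_def, sum_erase_eq_sub h1mem, hconv]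
  simp only [one_pow, one_zpow, mul_one, Int.cast_neg, Int.cast_mul, Int.cast_natCast,
    ← Complex.ofReal_mul, ← Complex.ofReal_sum,
    sum_range_fract_mul_fract_eq_neg_dedekindSum hp0 hq, sum_range_fract_div hp0]
  have hpC : (p : ℂ) ≠ 0 := Nat.cast_ne_zero.mpr hp0.ne'
  push_cast
  field_simp
  ring
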